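/- Let M be a unital quantum channel and ω ∈ ℂ with |ω| = 1. Then A is an eigenvector of M with eigenvalue ω if and only if A is an eigenvector of the adjoint M† with eigenvalue ω̄. Moreover, M(A) = ω A if and only if Mᵢ A = ω A Mᵢ for every Kraus operator Mᵢ of M, and the eigenspace of M for ω is spanned by partial isometries. -/

import Mathlib

open Matrix
open scoped ComplexOrder

noncomputable section

abbrev Mat (d : ℕ) := Matrix (Fin d) (Fin d) ℂ

/-- `K` is a Kraus representation of the linear map `Φ`. -/
def IsKrausRep {d : ℕ} (Φ : Mat d →ₗ[ℂ] Mat d) {n : ℕ} (K : Fin n → Mat d) : Prop :=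
  (∀ A, Φ A = ∑ i, K i * A * (K i)ᴴ) ∧ ∑ i, (K i)ᴴ * K i = 1

/-- A quantum channel: completely positive trace-preserving map, i.e. admitting a Kraus
representation with the normalization condition. -/
def IsCPTP {d : ℕ} (Φ : Mat d →ₗ[ℂ] Mat d) : Prop :=
  ∃ (n : ℕ) (K : Fin n → Mat d), IsKrausRep Φ K

/-- A density matrix: positive semidefinite with unit trace. -/
def IsDensity {d : ℕ} (ρ : Mat d) : Prop := ρ.PosSemidef ∧ ρ.trace = 1

/-- Ergodicity: the channel has a unique fixed point density matrix. -/
def IsErgodic {d : ℕ} (Φ : Mat d →ₗ[ℂ] Mat d) : Prop :=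
  ∃! ρ : Mat d, IsDensity ρ ∧ Φ ρ = ρ

/-- The support of an operator, viewed as a subspace of `ℂ^d`. -/
def supp {d : ℕ} (ρ : Mat d) : Submodule ℂ (Fin d → ℂ) := LinearMap.range ρ.mulVecLin

/-- The trace norm `‖A‖₁ = Tr √(A†A)`. -/
def traceNorm {d : ℕ} (A : Mat d) : ℝ :=
  (((Matrix.posSemidef_conjTranspose_mul_self A).1.eigenvectorUnitary.1 *
    diagonal (((↑) : ℝ → ℂ) ∘ (Real.sqrt ·) ∘ (Matrix.posSemidef_conjTranspose_mul_self A).1.eigenvalues) *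
    (star (Matrix.posSemidef_conjTranspose_mul_self A).1.eigenvectorUnitary : Mat d)).trace).re

/-- Mixing: iterates of the channel converge in trace norm to a unique state. -/
def IsMixing {d : ℕ} (Φ : Mat d →ₗ[ℂ] Mat d) : Prop :=
  ∃ ρs : Mat d, IsDensity ρs ∧ ∀ ρ : Mat d, IsDensity ρ →
    Filter.Tendsto (fun k : ℕ => traceNorm ((Φ ^ k) ρ - ρs)) Filter.atTop (nhds 0)

/-- A subspace `S` is invariant for a channel if every Kraus operator (of any Kraus
representation) maps `S` into itself. -/
def IsInvariantSubspace {d : ℕ} (Φ : Mat d →ₗ[ℂ] Mat d) (S : Submodule ℂ (Fin d → ℂ)) : Prop :=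
  ∀ (n : ℕ) (K : Fin n → Mat d), IsKrausRep Φ K → ∀ i, ∀ x ∈ S, (K i).mulVec x ∈ S

/-
If `M(A) = ωA` with `|ω| = 1`, the defects `Xᵢ = Mᵢ A - ω A Mᵢ` satisfy
`Σ Xᵢ Xᵢ† = M(AA†) - AA†`, which has trace zero because `M` is trace preserving; so every `Xᵢ`
vanishes. Conversely `Mᵢ A = ω A Mᵢ` gives back `M(A) = ωA` by unitality. The adjoint has Kraus
operators `Mᵢ†`, which again form a unital channel, so the argument runs in both directions.
Together, `Mᵢ A = ω A Mᵢ` and `Mᵢ† A = ω̄ A Mᵢ†` make each `Mᵢ` commute with `A†A`, hence with its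
spectral projections `Pₜ`; so the partial isometries `A Pₜ / √t` lie in the same eigenspace, and
`A = Σₜ √t · A Pₜ / √t`.
-/

section Spectral

variable {m : Type*} [Fintype m]

theorem Matrix.eq_zero_of_trace_sum_mul_conjTranspose_self {ι n : Type*} [Fintype ι] [Fintype n]
    {X : ι → Matrix m n ℂ} (h : (∑ i, X i * (X i)ᴴ).trace = 0) (i : ι) : X i = 0 := by
  rw [trace_sum, Finset.sum_eq_zero_iff_of_nonneg
    fun j _ => (posSemidef_self_mul_conjTranspose (X j)).trace_nonneg] at h
  exact trace_mul_conjTranspose_self_eq_zero_iff.mp (h i (Finset.mem_univ i))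

theorem Matrix.commute_conjTranspose_mul_self_of_mul_eq {K A : Matrix m m ℂ} {ω : ℂ}
    (hω : star ω * ω = 1) (h : K * A = ω • (A * K)) (h' : Kᴴ * A = star ω • (A * Kᴴ)) :
    Commute K (Aᴴ * A) := by
  have hAK : A * K = star ω • (K * A) := by rw [h, smul_smul, hω, one_smul]
  have hAstarK : Aᴴ * K = ω • (K * Aᴴ) := by simpa using congrArg conjTranspose h'
  change K * (Aᴴ * A) = Aᴴ * A * K
  rw [mul_assoc Aᴴ, hAK, mul_smul_comm, ← mul_assoc Aᴴ, hAstarK, smul_mul_assoc, smul_smul, hω,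
    one_smul, mul_assoc]

variable [DecidableEq m]

theorem Matrix.conjTranspose_cfc (B : Matrix m m ℂ) (f : ℝ → ℝ) : (cfc f B)ᴴ = cfc f B :=
  IsSelfAdjoint.star_eq (cfc_predicate f B)

/-- Tagged `fun_prop` so that the continuity side conditions of the `cfc` lemmas are discharged
automatically. -/
@[fun_prop]
theorem Matrix.continuousOn_spectrum_real (B : Matrix m m ℂ) (f : ℝ → ℝ) :
    ContinuousOn f (spectrum ℝ B) :=
  B.finite_real_spectrum.continuousOn f

theorem Matrix.mul_cfc_eq_self {A : Matrix m m ℂ} {h : ℝ → ℝ}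
    (hh : ∀ x ∈ spectrum ℝ (Aᴴ * A), x ≠ 0 → h x = 1) : A * cfc h (Aᴴ * A) = A := by
  have hH : IsSelfAdjoint (Aᴴ * A) := isHermitian_conjTranspose_mul_self A
  have hker : A * cfc (fun x => 1 - h x) (Aᴴ * A) = 0 := by
    rw [← conjTranspose_mul_self_eq_zero, conjTranspose_mul, conjTranspose_cfc]
    calc cfc (fun x => 1 - h x) (Aᴴ * A) * Aᴴ * (A * cfc (fun x => 1 - h x) (Aᴴ * A))
        = cfc (fun x => 1 - h x) (Aᴴ * A) * (Aᴴ * A) * cfc (fun x => 1 - h x) (Aᴴ * A) := by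
          simp only [mul_assoc]
      _ = cfc (fun x => (1 - h x) * x * (1 - h x)) (Aᴴ * A) := by
        rw [cfc_mul, cfc_mul, cfc_id' ℝ (Aᴴ * A)]
      _ = cfc (0 : ℝ → ℝ) (Aᴴ * A) := cfc_congr fun x hx => by
        by_cases hx0 : x = 0 <;> simp [hx0, hh x hx]
      _ = 0 := cfc_zero ..
  rwa [cfc_sub, cfc_const_one ℝ (Aᴴ * A), mul_sub, mul_one, sub_eq_zero, eq_comm] at hker

/-- `A Pₜ / √t`, where `Pₜ` is the spectral projection of `A†A` for `t`. -/
def Matrix.spectralPartialIsometry (A : Matrix m m ℂ) (t : ℝ) : Matrix m m ℂ :=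
  A * cfc (fun x => if x = t then (√t)⁻¹ else 0) (Aᴴ * A)

theorem Matrix.spectralPartialIsometry_mul_conjTranspose_mul (A : Matrix m m ℂ) (t : ℝ) :
    A.spectralPartialIsometry t * (A.spectralPartialIsometry t)ᴴ * A.spectralPartialIsometry t =
      A.spectralPartialIsometry t := by
  have hH : IsSelfAdjoint (Aᴴ * A) := isHermitian_conjTranspose_mul_self A
  set g : ℝ → ℝ := fun x => if x = t then (√t)⁻¹ else 0
  have hg : ∀ x, g x * g x * x * g x = g x := by
    intro x
    by_cases hx : x = t
    · subst hx
      rcases le_or_gt x 0 with hx0 | hx0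
      · simp [g, Real.sqrt_eq_zero'.mpr hx0]
      · have hsq := Real.mul_self_sqrt hx0.le
        have hsqrt := (Real.sqrt_pos.mpr hx0).ne'
        simp only [g, if_true]
        field_simp
        linarith
    · simp [g, hx]
  unfold spectralPartialIsometry
  rw [conjTranspose_mul, conjTranspose_cfc]
  calc A * cfc g (Aᴴ * A) * (cfc g (Aᴴ * A) * Aᴴ) * (A * cfc g (Aᴴ * A))
      = A * (cfc g (Aᴴ * A) * cfc g (Aᴴ * A) * (Aᴴ * A) * cfc g (Aᴴ * A)) := by
        simp only [mul_assoc]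
    _ = A * cfc (fun x => g x * g x * x * g x) (Aᴴ * A) := by
        rw [cfc_mul, cfc_mul, cfc_mul, cfc_id' ℝ (Aᴴ * A)]
    _ = A * cfc g (Aᴴ * A) := by simp only [hg]

open scoped MatrixOrder in
theorem Matrix.sum_sqrt_smul_spectralPartialIsometry (A : Matrix m m ℂ) :
    ∑ t ∈ (Aᴴ * A).finite_real_spectrum.toFinset, √t • A.spectralPartialIsometry t = A := by
  set S := (Aᴴ * A).finite_real_spectrum.toFinset
  calc ∑ t ∈ S, √t • A.spectralPartialIsometry t
      = A * cfc (∑ t ∈ S, fun x => √t * if x = t then (√t)⁻¹ else 0) (Aᴴ * A) := by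
        rw [cfc_sum, Finset.mul_sum]
        refine Finset.sum_congr rfl fun t _ => ?_
        rw [cfc_const_mul, mul_smul_comm, spectralPartialIsometry]
    _ = A := mul_cfc_eq_self fun x hx hx0 => by
        have hxpos : 0 < x := (spectrum_nonneg_of_nonneg (star_mul_self_nonneg A) hx).lt_of_ne' hx0
        simp only [Finset.sum_apply, mul_ite, mul_zero, Finset.sum_ite_eq, Set.Finite.mem_toFinset,
          S, hx, if_true]
        exact mul_inv_cancel₀ (Real.sqrt_pos.mpr hxpos).ne'

theorem Matrix.mul_spectralPartialIsometry_of_mul_eq {K A : Matrix m m ℂ} {ω : ℂ}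
    (hA : K * A = ω • (A * K)) (hK : Commute K (Aᴴ * A)) (t : ℝ) :
    K * A.spectralPartialIsometry t = ω • (A.spectralPartialIsometry t * K) := by
  unfold spectralPartialIsometry
  rw [← mul_assoc, hA, smul_mul_assoc, mul_assoc, mul_assoc, (hK.symm.cfc_real _).eq]

end Spectral

section KrausFamily

variable {m ι : Type*} [Fintype m] [DecidableEq m] [Fintype ι] {K : ι → Matrix m m ℂ}
  {A : Matrix m m ℂ} {ω : ℂ}

theorem sum_kraus_eq_smul_of_mul_eq (hU : ∑ i, K i * (K i)ᴴ = 1)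
    (hA : ∀ i, K i * A = ω • (A * K i)) : ∑ i, K i * A * (K i)ᴴ = ω • A :=
  calc ∑ i, K i * A * (K i)ᴴ = ∑ i, ω • (A * (K i * (K i)ᴴ)) :=
        Finset.sum_congr rfl fun i _ => by rw [hA i, smul_mul_assoc, mul_assoc]
    _ = ω • A := by rw [← Finset.smul_sum, ← Finset.mul_sum, hU, mul_one]

theorem sum_conjTranspose_kraus_eq_smul_of_mul_eq (hTP : ∑ i, (K i)ᴴ * K i = 1)
    (hω : star ω * ω = 1) (hA : ∀ i, K i * A = ω • (A * K i)) :
    ∑ i, (K i)ᴴ * A * K i = star ω • A := by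
  have hsum : A = ω • ∑ i, (K i)ᴴ * A * K i :=
    calc A = ∑ i, (K i)ᴴ * (K i * A) := by
          simp only [← mul_assoc]; rw [← Finset.sum_mul, hTP, one_mul]
      _ = ω • ∑ i, (K i)ᴴ * A * K i := by
          simp only [hA, mul_smul_comm, ← mul_assoc]; rw [Finset.smul_sum]
  conv_rhs => rw [hsum, smul_smul, hω, one_smul]

theorem kraus_mul_eq_smul_of_sum_eq (hTP : ∑ i, (K i)ᴴ * K i = 1) (hU : ∑ i, K i * (K i)ᴴ = 1)
    (hω : star ω * ω = 1) (hA : ∑ i, K i * A * (K i)ᴴ = ω • A) (i : ι) :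
    K i * A = ω • (A * K i) := by
  have hω' : ω * star ω = 1 := by rw [mul_comm, hω]
  have hAH : ∑ j, K j * Aᴴ * (K j)ᴴ = star ω • Aᴴ := by
    simpa [conjTranspose_sum, mul_assoc] using congrArg conjTranspose hA
  set X : ι → Matrix m m ℂ := fun j => K j * A - ω • (A * K j)
  have hexpand : ∀ j, X j * (X j)ᴴ = K j * (A * Aᴴ) * (K j)ᴴ
      - star ω • (K j * A * (K j)ᴴ * Aᴴ) - ω • (A * (K j * Aᴴ * (K j)ᴴ))
      + A * (K j * (K j)ᴴ) * Aᴴ := by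
    intro j
    simp only [X, conjTranspose_sub, conjTranspose_smul, conjTranspose_mul, sub_mul, mul_sub,
      smul_sub, smul_mul_assoc, mul_smul_comm, smul_smul, hω, one_smul, mul_assoc]
    abel
  have hsum : ∑ j, X j * (X j)ᴴ = ∑ j, K j * (A * Aᴴ) * (K j)ᴴ - A * Aᴴ := by
    simp only [hexpand, Finset.sum_add_distrib, Finset.sum_sub_distrib, ← Finset.smul_sum,
      ← Finset.sum_mul, ← Finset.mul_sum, hA, hAH, hU, smul_mul_assoc, mul_smul_comm, smul_smul,
      hω, hω', one_smul, mul_one]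
    abel
  have htrace : (∑ j, X j * (X j)ᴴ).trace = 0 := by
    rw [hsum, trace_sub, trace_sum]
    simp only [trace_mul_cycle (K _)]
    rw [← trace_sum, ← Finset.sum_mul, hTP, one_mul, sub_self]
  exact sub_eq_zero.mp (eq_zero_of_trace_sum_mul_conjTranspose_self htrace i)

theorem conjTranspose_kraus_mul_eq_smul_of_sum_eq (hTP : ∑ i, (K i)ᴴ * K i = 1)
    (hU : ∑ i, K i * (K i)ᴴ = 1) (hω : star ω * ω = 1)
    (hA : ∑ i, (K i)ᴴ * A * K i = star ω • A) (i : ι) :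
    (K i)ᴴ * A = star ω • (A * (K i)ᴴ) :=
  kraus_mul_eq_smul_of_sum_eq (K := fun i => (K i)ᴴ) (by simpa using hU) (by simpa using hTP)
    (by rwa [star_star, mul_comm]) (by simpa using hA) i

theorem sum_kraus_eq_smul_iff (hTP : ∑ i, (K i)ᴴ * K i = 1) (hU : ∑ i, K i * (K i)ᴴ = 1)
    (hω : star ω * ω = 1) :
    ∑ i, K i * A * (K i)ᴴ = ω • A ↔ ∑ i, (K i)ᴴ * A * K i = star ω • A := by
  refine ⟨fun h => sum_conjTranspose_kraus_eq_smul_of_mul_eq hTP hω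
    (kraus_mul_eq_smul_of_sum_eq hTP hU hω h), fun h => ?_⟩
  simpa using sum_conjTranspose_kraus_eq_smul_of_mul_eq (K := fun i => (K i)ᴴ) (by simpa using hU)
    (by rwa [star_star, mul_comm]) (conjTranspose_kraus_mul_eq_smul_of_sum_eq hTP hU hω h)

end KrausFamily

theorem IsKrausRep.sum_mul_conjTranspose_eq_one {d n : ℕ} {Φ : Mat d →ₗ[ℂ] Mat d}
    {K : Fin n → Mat d} (hK : IsKrausRep Φ K) (hunital : Φ 1 = 1) : ∑ i, K i * (K i)ᴴ = 1 := by
  simpa [hunital] using (hK.1 1).symm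

theorem IsKrausRep.apply_of_adjoint {d n : ℕ} {Φ Φd : Mat d →ₗ[ℂ] Mat d} {K : Fin n → Mat d}
    (hK : IsKrausRep Φ K) (hadj : ∀ A B : Mat d, (Aᴴ * Φ B).trace = ((Φd A)ᴴ * B).trace)
    (A : Mat d) : Φd A = ∑ i, (K i)ᴴ * A * K i := by
  rw [← conjTranspose_inj, ext_iff_trace_mul_right]
  intro B
  rw [← hadj, hK.1 B, Finset.mul_sum, trace_sum, conjTranspose_sum, Finset.sum_mul, trace_sum]
  refine Finset.sum_congr rfl fun i _ => ?_
  rw [conjTranspose_mul, conjTranspose_mul, conjTranspose_conjTranspose, ← trace_mul_cycle]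
  simp only [mul_assoc]

/-- Peripheral eigenvectors of unital channels: `A` is an eigenvector of `Φ` with eigenvalue
`ω` (`|ω| = 1`) iff it is an eigenvector of the adjoint with eigenvalue `ω̄`, iff
`Mᵢ A = ω A Mᵢ` for every Kraus representation; moreover the peripheral eigenspace is spanned
by partial isometries. -/
theorem unital_peripheral_eigenvectors {d : ℕ} (Φ Φd : Mat d →ₗ[ℂ] Mat d)
    (hΦ : IsCPTP Φ) (hunital : Φ 1 = 1) (hadj : ∀ A B : Mat d, (Aᴴ * Φ B).trace = ((Φd A)ᴴ * B).trace)
    (ω : ℂ) (hω : ‖ω‖ = 1) :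
    (∀ A : Mat d, Φ A = ω • A ↔ Φd A = (starRingEnd ℂ ω) • A) ∧
    (∀ A : Mat d, Φ A = ω • A ↔
      ∀ (n : ℕ) (K : Fin n → Mat d), IsKrausRep Φ K → ∀ i, K i * A = ω • (A * K i)) ∧
    (∀ A : Mat d, Φ A = ω • A →
      A ∈ Submodule.span ℂ {T : Mat d | T * Tᴴ * T = T ∧ Φ T = ω • T}) := by
  obtain ⟨n, K, hK⟩ := hΦ
  have hU := hK.sum_mul_conjTranspose_eq_one hunital
  have hω' : star ω * ω = 1 := by simp [Complex.conj_mul', hω]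
  have hcomm : ∀ A, Φ A = ω • A → ∀ (n : ℕ) (L : Fin n → Mat d), IsKrausRep Φ L →
      ∀ i, L i * A = ω • (A * L i) := fun A hA n L hL =>
    kraus_mul_eq_smul_of_sum_eq hL.2 (hL.sum_mul_conjTranspose_eq_one hunital) hω'
      ((hL.1 A).symm.trans hA)
  refine ⟨fun A => ?_, fun A => ⟨hcomm A, fun h => ?_⟩, fun A hA => ?_⟩
  · rw [hK.1, hK.apply_of_adjoint hadj]
    exact sum_kraus_eq_smul_iff hK.2 hU hω'
  · rw [hK.1]
    exact sum_kraus_eq_smul_of_mul_eq hU (h n K hK)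
  · have hAK := hcomm A hA n K hK
    have hAKH := conjTranspose_kraus_mul_eq_smul_of_sum_eq hK.2 hU hω'
      (sum_conjTranspose_kraus_eq_smul_of_mul_eq hK.2 hω' hAK)
    rw [← A.sum_sqrt_smul_spectralPartialIsometry]
    refine Submodule.sum_mem _ fun t _ => Submodule.smul_of_tower_mem _ _ <|
      Submodule.subset_span ⟨A.spectralPartialIsometry_mul_conjTranspose_mul t, ?_⟩
    rw [hK.1]
    exact sum_kraus_eq_smul_of_mul_eq hU fun i => mul_spectralPartialIsometry_of_mul_eq (hAK i)
      (commute_conjTranspose_mul_self_of_mul_eq hω' (hAK i) (hAKH i)) t
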